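/- arXiv:2410.24030 — 3 statements merged into one kernel-verified Lean document; each statement's English description precedes it below -/
import Mathlib

section
/- Let A be an additive category and X, Y, Z objects such that Z ∈ add Y or X ∈ add Y. Then the canonical composition map Hom_A(Y, Z) ⊗_{End_A(Y)} Hom_A(X, Y) → Hom_A(X, Z) is an isomorphism. -/
/-!
If `Z` is a retract of `Yⁿ`, the retraction yields maps `pᵢ : Z ⟶ Y`, `qᵢ : Y ⟶ Z` with
`∑ pᵢ ≫ qᵢ = 𝟙 Z`. Every `t : X ⟶ Z` is then `∑ (t ≫ pᵢ) ≫ qᵢ`, a sum of composites through `Y`,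
so a factorisation of a balanced map `β` is unique and must be `t ↦ ∑ β qᵢ (t ≫ pᵢ)`; balancedness
moves `g ≫ pᵢ ∈ End Y` across `β`, which shows that this formula does factor `β`. The case where
`X` is a retract of `Yⁿ` is symmetric.
-/

open CategoryTheory CategoryTheory.Limits

namespace CategoryTheory.Preadditive

variable {C : Type*} [Category C] [Preadditive C]

theorem sum_comp_π_ι_comp_eq_id {ι : Type} [Fintype ι] {f : ι → C} [HasBiproduct f] {Z : C}
    {s : Z ⟶ ⨁ f} {r : ⨁ f ⟶ Z} (hsr : s ≫ r = 𝟙 Z) :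
    ∑ i, (s ≫ biproduct.π f i) ≫ (biproduct.ι f i ≫ r) = 𝟙 Z := by
  calc _ = s ≫ (∑ i, biproduct.π f i ≫ biproduct.ι f i) ≫ r := by
          simp only [sum_comp, comp_sum, Category.assoc]
    _ = 𝟙 Z := by rw [biproduct.total, Category.id_comp, hsr]

variable {X Y Z : C} {T : Type*} [AddCommGroup T] (β : (Y ⟶ Z) →+ (X ⟶ Y) →+ T)
  {ι : Type*} [Fintype ι]

theorem existsUnique_comp_eq_of_sum_comp_eq_id_right (p : ι → (Z ⟶ Y)) (q : ι → (Y ⟶ Z))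
    (hpq : ∑ i, p i ≫ q i = 𝟙 Z)
    (hβ : ∀ (g : Y ⟶ Z) (α : Y ⟶ Y) (f : X ⟶ Y), β (α ≫ g) f = β g (f ≫ α)) :
    ∃! γ : (X ⟶ Z) →+ T, ∀ (f : X ⟶ Y) (g : Y ⟶ Z), γ (f ≫ g) = β g f := by
  refine ⟨∑ i, (β (q i)).comp (rightComp X (p i)), fun f g => ?_, fun γ hγ => ?_⟩
  · simp only [AddMonoidHom.finsetSum_apply, AddMonoidHom.comp_apply, rightComp,
      AddMonoidHom.mk'_apply]
    calc ∑ i, β (q i) ((f ≫ g) ≫ p i)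
        = ∑ i, β ((g ≫ p i) ≫ q i) f :=
          Finset.sum_congr rfl fun i _ => by rw [hβ, Category.assoc]
      _ = β g f := by
          rw [← AddMonoidHom.finsetSum_apply, ← map_sum]
          simp only [Category.assoc, ← comp_sum, hpq, Category.comp_id]
  · ext t
    calc γ t = γ (∑ i, (t ≫ p i) ≫ q i) := by
          simp only [Category.assoc, ← comp_sum, hpq, Category.comp_id]
      _ = _ := by
          simp only [map_sum, hγ, AddMonoidHom.finsetSum_apply, AddMonoidHom.comp_apply,
            rightComp, AddMonoidHom.mk'_apply]

theorem existsUnique_comp_eq_of_sum_comp_eq_id_left (p : ι → (X ⟶ Y)) (q : ι → (Y ⟶ X))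
    (hpq : ∑ i, p i ≫ q i = 𝟙 X)
    (hβ : ∀ (g : Y ⟶ Z) (α : Y ⟶ Y) (f : X ⟶ Y), β (α ≫ g) f = β g (f ≫ α)) :
    ∃! γ : (X ⟶ Z) →+ T, ∀ (f : X ⟶ Y) (g : Y ⟶ Z), γ (f ≫ g) = β g f := by
  refine ⟨∑ i, (β.flip (p i)).comp (leftComp Z (q i)), fun f g => ?_, fun γ hγ => ?_⟩
  · simp only [AddMonoidHom.finsetSum_apply, AddMonoidHom.comp_apply, AddMonoidHom.flip_apply,
      leftComp, AddMonoidHom.mk'_apply]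
    calc ∑ i, β (q i ≫ f ≫ g) (p i)
        = ∑ i, β g (p i ≫ q i ≫ f) :=
          Finset.sum_congr rfl fun i _ => by rw [← Category.assoc, hβ]
      _ = β g f := by
          rw [← map_sum]
          simp only [← Category.assoc, ← sum_comp, hpq, Category.id_comp]
  · ext t
    calc γ t = γ (∑ i, p i ≫ q i ≫ t) := by
          simp only [← Category.assoc, ← sum_comp, hpq, Category.id_comp]
      _ = _ := by
          simp only [map_sum, hγ, AddMonoidHom.finsetSum_apply, AddMonoidHom.comp_apply,
            AddMonoidHom.flip_apply, leftComp, AddMonoidHom.mk'_apply]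

end CategoryTheory.Preadditive

open CategoryTheory.Preadditive in
theorem statement9_general {C : Type} [Category.{0} C] [Preadditive C] [HasFiniteBiproducts C]
    (X Y Z : C)
    (h : (∃ (n : ℕ) (s : Z ⟶ ⨁ (fun _ : Fin n => Y)) (r : (⨁ (fun _ : Fin n => Y)) ⟶ Z),
            s ≫ r = 𝟙 Z) ∨
         (∃ (n : ℕ) (s : X ⟶ ⨁ (fun _ : Fin n => Y)) (r : (⨁ (fun _ : Fin n => Y)) ⟶ X),
            s ≫ r = 𝟙 X)) :
    ∀ (T : Type) [AddCommGroup T] (β : (Y ⟶ Z) →+ (X ⟶ Y) →+ T),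
      (∀ (g : Y ⟶ Z) (α : End Y) (f : X ⟶ Y), β ((α : Y ⟶ Y) ≫ g) f = β g (f ≫ α)) →
      ∃! γ : (X ⟶ Z) →+ T, ∀ (f : X ⟶ Y) (g : Y ⟶ Z), γ (f ≫ g) = β g f := by
  intro T _ β hβ
  rcases h with ⟨n, s, r, hsr⟩ | ⟨n, s, r, hsr⟩
  · exact existsUnique_comp_eq_of_sum_comp_eq_id_right β _ _ (sum_comp_π_ι_comp_eq_id hsr) hβ
  · exact existsUnique_comp_eq_of_sum_comp_eq_id_left β _ _ (sum_comp_π_ι_comp_eq_id hsr) hβ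

/-- Let `A` be an additive idempotent-complete category and `X, Y, Z`
objects such that `Z ∈ add Y` or `X ∈ add Y`. Then the canonical composition map
`Hom(Y, Z) ⊗_{End Y} Hom(X, Y) → Hom(X, Z)`, `g ⊗ f ↦ f ≫ g`, is an isomorphism; stated via
the universal property of the balanced tensor product: composition is a universal
`End Y`-balanced biadditive map. -/
theorem statement9 {C : Type} [Category.{0} C] [Preadditive C] [HasFiniteBiproducts C]
    [IsIdempotentComplete C] (X Y Z : C)
    (h : (∃ (n : ℕ) (s : Z ⟶ ⨁ (fun _ : Fin n => Y)) (r : (⨁ (fun _ : Fin n => Y)) ⟶ Z),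
            s ≫ r = 𝟙 Z) ∨
         (∃ (n : ℕ) (s : X ⟶ ⨁ (fun _ : Fin n => Y)) (r : (⨁ (fun _ : Fin n => Y)) ⟶ X),
            s ≫ r = 𝟙 X)) :
    ∀ (T : Type) [AddCommGroup T] (β : (Y ⟶ Z) →+ (X ⟶ Y) →+ T),
      (∀ (g : Y ⟶ Z) (α : End Y) (f : X ⟶ Y), β ((α : Y ⟶ Y) ≫ g) f = β g (f ≫ α)) →
      ∃! γ : (X ⟶ Z) →+ T, ∀ (f : X ⟶ Y) (g : Y ⟶ Z), γ (f ≫ g) = β g f :=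
  statement9_general X Y Z h
end

section
/- Let Λ be a ring, e₀ an idempotent, and define for a finitely generated right Λ-module M the submodule rad₀(M) as the intersection of all submodules Y ⊆ M such that M·e₀·Λ ⊆ Y and Y is either equal to M or maximal among proper submodules containing M·e₀·Λ. Then for an epimorphism φ : M → N, the following are equivalent: (1) ker φ ⊆ rad₀(M); (2) for any submodule V ⊆ M with M·e₀ ⊆ V and ker φ + V = M one has V = M; (3) whenever α : M' → M is a morphism with M·e₀ ⊆ im α and φ∘α is an epimorphism, α is an epimorphism. -/
/-!
Both equivalences are formal. For (1) ⇔ (2): since `M` is finitely generated, every proper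
submodule `V ⊇ M·e₀·Λ` lies in a maximal one `Y`, which is one of the submodules cut out by
`rad₀(M)`; so `ker φ ⊆ rad₀(M)` says exactly that `ker φ` never supplements such a `V`.
For (2) ⇔ (3): as `φ` is onto, `ker φ + V = M` means `φ(V) = N`, so (3) for `α` is (2) for
`V = im α`; conversely (3) applies to the inclusion of `V`, which is finitely generated
because `Λ` is a noetherian ring.
-/

open MulOpposite

/-- The submodule `M·e₀·Λ` of a right `Λ`-module `M`. -/
def eSub (Λ : Type) [Ring Λ] (e₀ : Λ) (M : Type) [AddCommGroup M] [Module Λᵐᵒᵖ M] :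
    Submodule Λᵐᵒᵖ M :=
  Submodule.span Λᵐᵒᵖ (Set.range fun m : M => (op e₀) • m)

/-- The relative radical `rad₀(M)`: the intersection of all submodules `Y` containing
`M·e₀·Λ` that are either all of `M` or maximal among proper submodules containing
`M·e₀·Λ`. -/
def rad0 (Λ : Type) [Ring Λ] (e₀ : Λ) (M : Type) [AddCommGroup M] [Module Λᵐᵒᵖ M] :
    Submodule Λᵐᵒᵖ M :=
  sInf {Y : Submodule Λᵐᵒᵖ M | eSub Λ e₀ M ≤ Y ∧ (Y = ⊤ ∨ IsCoatom Y)}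

theorem le_sInf_coatoms_above_iff {α : Type*} [CompleteLattice α] [IsCoatomic α] {a b : α} :
    a ≤ sInf {y | b ≤ y ∧ (y = ⊤ ∨ IsCoatom y)} ↔ ∀ v, b ≤ v → a ⊔ v = ⊤ → v = ⊤ := by
  constructor
  · intro ha v hbv hav
    obtain hv | ⟨y, hy, hvy⟩ := IsCoatomic.eq_top_or_exists_le_coatom v
    · exact hv
    · have hay : a ≤ y := ha.trans (sInf_le ⟨hbv.trans hvy, Or.inr hy⟩)
      exact absurd (top_le_iff.mp (hav ▸ sup_le hay hvy)) hy.1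
  · intro h
    refine le_sInf ?_
    rintro y ⟨hby, rfl | hy⟩
    · exact le_top
    · by_contra hay
      exact hy.1 (h y hby (hy.2 _ (right_lt_sup.mpr hay)))

section

variable {Λ : Type} [Ring Λ] {e₀ : Λ} {M : Type} [AddCommGroup M] [Module Λᵐᵒᵖ M]

theorem eSub_le_iff {V : Submodule Λᵐᵒᵖ M} : eSub Λ e₀ M ≤ V ↔ ∀ m : M, op e₀ • m ∈ V := by
  rw [eSub, Submodule.span_le, Set.range_subset_iff]
  rfl

theorem le_rad0_iff [Module.Finite Λᵐᵒᵖ M] {K : Submodule Λᵐᵒᵖ M} :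
    K ≤ rad0 Λ e₀ M ↔ ∀ V : Submodule Λᵐᵒᵖ M, eSub Λ e₀ M ≤ V → K ⊔ V = ⊤ → V = ⊤ :=
  le_sInf_coatoms_above_iff

end

theorem forall_ker_sup_eq_top_iff_forall_surjective {A M N : Type} [Ring A] [IsNoetherianRing A]
    [AddCommGroup M] [Module A M] [Module.Finite A M] [AddCommGroup N] [Module A N]
    (φ : M →ₗ[A] N) (hφ : Function.Surjective φ) (S : Submodule A M) :
    (∀ V : Submodule A M, S ≤ V → LinearMap.ker φ ⊔ V = ⊤ → V = ⊤) ↔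
      ∀ (M' : Type) [AddCommGroup M'] [Module A M'] [Module.Finite A M'] (α : M' →ₗ[A] M),
        S ≤ LinearMap.range α → Function.Surjective (φ ∘ₗ α) → Function.Surjective α := by
  have ker_sup_eq_top_iff (V : Submodule A M) : LinearMap.ker φ ⊔ V = ⊤ ↔ V.map φ = ⊤ := by
    rw [LinearMap.map_eq_top_iff (LinearMap.range_eq_top.mpr hφ), sup_comm]
  constructor
  · intro h M' _ _ _ α hα hφα
    rw [← LinearMap.range_eq_top] at hφα ⊢
    exact h _ hα ((ker_sup_eq_top_iff _).mpr (LinearMap.range_comp α φ ▸ hφα))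
  · intro h V hV hφV
    have hsurj : Function.Surjective (φ ∘ₗ V.subtype) := by
      rw [← LinearMap.range_eq_top, LinearMap.range_comp, Submodule.range_subtype]
      exact (ker_sup_eq_top_iff V).mp hφV
    have := h V V.subtype (V.range_subtype.symm ▸ hV) hsurj
    rwa [← LinearMap.range_eq_top, Submodule.range_subtype] at this

theorem statement10_general {R Λ : Type} [CommRing R] [IsNoetherianRing R]
    [Ring Λ] [Algebra R Λ] [Module.Finite R Λ]
    (e₀ : Λ)
    (M N : Type) [AddCommGroup M] [Module Λᵐᵒᵖ M] [Module.Finite Λᵐᵒᵖ M]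
    [AddCommGroup N] [Module Λᵐᵒᵖ N]
    (φ : M →ₗ[Λᵐᵒᵖ] N) (hφ : Function.Surjective φ) :
    ((LinearMap.ker φ ≤ rad0 Λ e₀ M) ↔
      (∀ V : Submodule Λᵐᵒᵖ M, (∀ m : M, (op e₀) • m ∈ V) →
        LinearMap.ker φ ⊔ V = ⊤ → V = ⊤)) ∧
    ((∀ V : Submodule Λᵐᵒᵖ M, (∀ m : M, (op e₀) • m ∈ V) →
        LinearMap.ker φ ⊔ V = ⊤ → V = ⊤) ↔
      (∀ (M' : Type) [AddCommGroup M'] [Module Λᵐᵒᵖ M'] [Module.Finite Λᵐᵒᵖ M']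
        (α : M' →ₗ[Λᵐᵒᵖ] M), (∀ m : M, (op e₀) • m ∈ LinearMap.range α) →
          Function.Surjective (φ ∘ₗ α) → Function.Surjective α)) := by
  have : IsNoetherianRing Λᵐᵒᵖ := IsNoetherianRing.of_finite R Λᵐᵒᵖ
  simp only [← eSub_le_iff]
  exact ⟨le_rad0_iff, forall_ker_sup_eq_top_iff_forall_surjective φ hφ _⟩

/-- Let `Λ` be a ring (module-finite over a commutative noetherian local
ring `R`), `e₀ ∈ Λ` an idempotent, and `φ : M → N` an epimorphism of finitely generated
right `Λ`-modules. Then the following are equivalent: (1) `ker φ ⊆ rad₀(M)`;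
(2) any submodule `V ⊆ M` with `M·e₀ ⊆ V` and `ker φ + V = M` equals `M`;
(3) any `α : M' → M` with `M·e₀ ⊆ im α` such that `φ∘α` is an epimorphism is an
epimorphism. -/
theorem statement10 {R Λ : Type} [CommRing R] [IsNoetherianRing R] [IsLocalRing R]
    [Ring Λ] [Algebra R Λ] [Module.Finite R Λ]
    (e₀ : Λ) (he : e₀ * e₀ = e₀)
    (M N : Type) [AddCommGroup M] [Module Λᵐᵒᵖ M] [Module.Finite Λᵐᵒᵖ M]
    [AddCommGroup N] [Module Λᵐᵒᵖ N] [Module.Finite Λᵐᵒᵖ N]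
    (φ : M →ₗ[Λᵐᵒᵖ] N) (hφ : Function.Surjective φ) :
    ((LinearMap.ker φ ≤ rad0 Λ e₀ M) ↔
      (∀ V : Submodule Λᵐᵒᵖ M, (∀ m : M, (op e₀) • m ∈ V) →
        LinearMap.ker φ ⊔ V = ⊤ → V = ⊤)) ∧
    ((∀ V : Submodule Λᵐᵒᵖ M, (∀ m : M, (op e₀) • m ∈ V) →
        LinearMap.ker φ ⊔ V = ⊤ → V = ⊤) ↔
      (∀ (M' : Type) [AddCommGroup M'] [Module Λᵐᵒᵖ M'] [Module.Finite Λᵐᵒᵖ M']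
        (α : M' →ₗ[Λᵐᵒᵖ] M), (∀ m : M, (op e₀) • m ∈ LinearMap.range α) →
          Function.Surjective (φ ∘ₗ α) → Function.Surjective α)) :=
  statement10_general (R := R) e₀ M N φ hφ
end

section
/- Let Λ be a ring, e₀ an idempotent, and rad₀ as defined via submodules containing M·e₀·Λ. If f : X → Y and g : Y → Z are epimorphisms of finitely generated right Λ-modules with ker f ⊆ rad₀(X) and ker g ⊆ rad₀(Y), then ker(g∘f) ⊆ rad₀(X). -/
/-!
Every submodule `W` in the family defining `rad₀(X)` contains `ker f ⊆ rad₀(X)`, so it is the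
preimage of `f(W)`, and `f(W)` belongs to the family defining `rad₀(Y)`. Hence
`f⁻¹(rad₀(Y)) ⊆ rad₀(X)`, and `ker (g ∘ f) = f⁻¹(ker g) ⊆ f⁻¹(rad₀(Y))`.
-/

open MulOpposite

open Submodule

section Rad0

variable {Λ : Type} [Ring Λ] {e₀ : Λ} {M N : Type} [AddCommGroup M] [Module Λᵐᵒᵖ M]
  [AddCommGroup N] [Module Λᵐᵒᵖ N] {f : M →ₗ[Λᵐᵒᵖ] N}

theorem map_eSub_of_surjective (hf : Function.Surjective f) :
    (eSub Λ e₀ M).map f = eSub Λ e₀ N := by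
  have hcomm : (f ∘ fun m : M => op e₀ • m) = (fun n : N => op e₀ • n) ∘ f :=
    funext fun m => f.map_smul (op e₀) m
  rw [eSub, eSub, map_span, ← Set.range_comp, hcomm, hf.range_comp]

theorem comap_rad0_le_of_ker_le (hf : Function.Surjective f)
    (hker : LinearMap.ker f ≤ rad0 Λ e₀ M) : (rad0 Λ e₀ N).comap f ≤ rad0 Λ e₀ M := by
  refine le_sInf ?_
  rintro W ⟨heW, rfl | hW⟩
  · exact le_top
  have hkerW : LinearMap.ker f ≤ W := hker.trans (sInf_le ⟨heW, Or.inr hW⟩)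
  have heN : eSub Λ e₀ N ≤ W.map f := map_eSub_of_surjective hf ▸ map_mono heW
  have hradN : rad0 Λ e₀ N ≤ W.map f :=
    sInf_le ⟨heN, Or.inr (isCoatom_map_of_ker_le hf hkerW hW)⟩
  calc (rad0 Λ e₀ N).comap f ≤ (W.map f).comap f := comap_mono hradN
    _ = W := comap_map_eq_self hkerW

end Rad0

theorem statement11_general {Λ : Type} [Ring Λ] (e₀ : Λ)
    (X Y Z : Type) [AddCommGroup X] [Module Λᵐᵒᵖ X]
    [AddCommGroup Y] [Module Λᵐᵒᵖ Y]
    [AddCommGroup Z] [Module Λᵐᵒᵖ Z]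
    (f : X →ₗ[Λᵐᵒᵖ] Y) (hf : Function.Surjective f)
    (g : Y →ₗ[Λᵐᵒᵖ] Z)
    (hkf : LinearMap.ker f ≤ rad0 Λ e₀ X) (hkg : LinearMap.ker g ≤ rad0 Λ e₀ Y) :
    LinearMap.ker (g ∘ₗ f) ≤ rad0 Λ e₀ X :=
  calc LinearMap.ker (g ∘ₗ f) = (LinearMap.ker g).comap f := LinearMap.ker_comp f g
    _ ≤ (rad0 Λ e₀ Y).comap f := comap_mono hkg
    _ ≤ rad0 Λ e₀ X := comap_rad0_le_of_ker_le hf hkf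

/-- Let `Λ` be a ring and `e₀` an idempotent. If `f : X → Y` and
`g : Y → Z` are epimorphisms of finitely generated right `Λ`-modules with
`ker f ⊆ rad₀(X)` and `ker g ⊆ rad₀(Y)`, then `ker (g∘f) ⊆ rad₀(X)`. -/
theorem statement11 {Λ : Type} [Ring Λ] (e₀ : Λ) (he : e₀ * e₀ = e₀)
    (X Y Z : Type) [AddCommGroup X] [Module Λᵐᵒᵖ X] [Module.Finite Λᵐᵒᵖ X]
    [AddCommGroup Y] [Module Λᵐᵒᵖ Y] [Module.Finite Λᵐᵒᵖ Y]
    [AddCommGroup Z] [Module Λᵐᵒᵖ Z] [Module.Finite Λᵐᵒᵖ Z]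
    (f : X →ₗ[Λᵐᵒᵖ] Y) (hf : Function.Surjective f)
    (g : Y →ₗ[Λᵐᵒᵖ] Z) (hg : Function.Surjective g)
    (hkf : LinearMap.ker f ≤ rad0 Λ e₀ X) (hkg : LinearMap.ker g ≤ rad0 Λ e₀ Y) :
    LinearMap.ker (g ∘ₗ f) ≤ rad0 Λ e₀ X :=
  statement11_general e₀ X Y Z f hf g hkf hkg
end
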